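/- Let B, C, D, K, P, Q be positive real numbers with C ≤ 1, and suppose R0 := C P K / D > 1. Then there exists exactly one pair (U, V) with U > 0 and V > 0 satisfying B U (1 - U/K) = P U V + Q U V^2 and C(P U V + Q U V^2) = D V; that is, the system U' = B U(1 - U/K) - P U V - Q U V^2, V' = C(P U V + Q U V^2) - D V has a unique positive equilibrium. -/

import Mathlib

/-!
Writing `W = P + Q V`, the predator equation at `V > 0` forces `U = D / (C W)`, and substituting this
into the prey equation at `U > 0` leaves the cubic `V W² - B W + E = 0` with `E = B D / (K C)`.
The condition `R0 > 1` is exactly `E < B P`, so the cubic is negative at `V = 0` and has a positive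
root by the intermediate value theorem. Since `V W² - B W + E = V (W² - B Q) - (B P - E)`, at a
positive root `W² > B Q`, and as `V (W² - B Q)` is increasing in `V` from there on, the cubic stays
positive to the right of its first positive root.
-/

def equilibriumCubic (B P Q E V : ℝ) : ℝ :=
  V * (P + Q * V) ^ 2 - B * (P + Q * V) + E

section equilibriumCubic

variable {B P Q E : ℝ}

theorem exists_pos_root_equilibriumCubic (hB : 0 < B) (hP : 0 < P) (hQ : 0 ≤ Q) (hE : 0 ≤ E)
    (hEBP : E < B * P) : ∃ V, 0 < V ∧ equilibriumCubic B P Q E V = 0 := by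
  have hcont : Continuous (equilibriumCubic B P Q E) := by
    unfold equilibriumCubic; fun_prop
  have h_zero : equilibriumCubic B P Q E 0 < 0 := by
    simp only [equilibriumCubic]; linarith
  have h_BP : 0 ≤ equilibriumCubic B P Q E (B / P) := by
    have : equilibriumCubic B P Q E (B / P) = Q * B ^ 2 / P + Q ^ 2 * B ^ 3 / P ^ 3 + E := by
      simp only [equilibriumCubic]; field_simp; ring
    rw [this]
    positivity
  obtain ⟨V, hV, hroot⟩ := intermediate_value_Icc (div_pos hB hP).le hcont.continuousOn
    ⟨h_zero.le, h_BP⟩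
  refine ⟨V, hV.1.lt_of_ne ?_, hroot⟩
  rintro rfl
  exact h_zero.ne hroot

theorem equilibriumCubic_pos_of_root_lt (hP : 0 < P) (hQ : 0 ≤ Q) (hEBP : E < B * P)
    {a b : ℝ} (ha : 0 < a) (hab : a < b) (hroot : equilibriumCubic B P Q E a = 0) :
    0 < equilibriumCubic B P Q E b := by
  simp only [equilibriumCubic] at hroot ⊢
  have h_gap : 0 < (P + Q * a) ^ 2 - B * Q := by nlinarith
  have h_sq : (P + Q * a) ^ 2 ≤ (P + Q * b) ^ 2 := by gcongr
  nlinarith [mul_lt_mul_of_pos_right hab h_gap]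

theorem pos_root_equilibriumCubic_unique (hP : 0 < P) (hQ : 0 ≤ Q) (hEBP : E < B * P)
    {a b : ℝ} (ha : 0 < a) (hb : 0 < b) (hra : equilibriumCubic B P Q E a = 0)
    (hrb : equilibriumCubic B P Q E b = 0) : a = b := by
  rcases lt_trichotomy a b with hab | hab | hab
  · exact absurd hrb (equilibriumCubic_pos_of_root_lt hP hQ hEBP ha hab hra).ne'
  · exact hab
  · exact absurd hra (equilibriumCubic_pos_of_root_lt hP hQ hEBP hb hab hrb).ne'

end equilibriumCubic

theorem isEquilibrium_iff {B C D K P Q U V : ℝ} (hC : 0 < C) (hK : 0 < K) (hP : 0 < P)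
    (hQ : 0 ≤ Q) (hU : 0 < U) (hV : 0 < V) :
    (B * U * (1 - U / K) = P * U * V + Q * U * V ^ 2 ∧
      C * (P * U * V + Q * U * V ^ 2) = D * V) ↔
    (U = D / (C * (P + Q * V)) ∧ equilibriumCubic B P Q (B * D / (K * C)) V = 0) := by
  have hW : 0 < P + Q * V := by positivity
  have h_pred : C * (P * U * V + Q * U * V ^ 2) = D * V ↔ U = D / (C * (P + Q * V)) := by
    rw [eq_div_iff (by positivity)]
    constructor
    · intro h
      apply mul_right_cancel₀ hV.ne'
      linear_combination h
    · intro h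
      linear_combination V * h
  rw [h_pred, and_comm]
  refine and_congr_right fun hUV => ?_
  have hD : D = C * U * (P + Q * V) := by rw [hUV]; field_simp
  have h_prey : B * U * (1 - U / K) - (P * U * V + Q * U * V ^ 2) =
      U / K * (B * (K - U) - K * V * (P + Q * V)) := by
    field_simp
  have h_cubic : equilibriumCubic B P Q (B * D / (K * C)) V =
      -((P + Q * V) / K) * (B * (K - U) - K * V * (P + Q * V)) := by
    rw [equilibriumCubic, hD]; field_simp; ring
  rw [← sub_eq_zero, h_prey, h_cubic, mul_eq_zero, mul_eq_zero,
    or_iff_right (div_pos hU hK).ne', or_iff_right (neg_neg_of_pos (div_pos hW hK)).ne]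

theorem unique_positive_equilibrium_nonscaled_general (B C D K P Q : ℝ)
    (hB : 0 < B) (hC : 0 < C) (hD : 0 < D) (hK : 0 < K) (hP : 0 < P) (hQ : 0 < Q)
    (hR0 : 1 < C * P * K / D) :
    ∃! UV : ℝ × ℝ, 0 < UV.1 ∧ 0 < UV.2 ∧
      B * UV.1 * (1 - UV.1 / K) = P * UV.1 * UV.2 + Q * UV.1 * UV.2 ^ 2 ∧
      C * (P * UV.1 * UV.2 + Q * UV.1 * UV.2 ^ 2) = D * UV.2 := by
  have hEBP : B * D / (K * C) < B * P := by
    rw [div_lt_iff₀ (by positivity)]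
    nlinarith [(one_lt_div hD).mp hR0]
  obtain ⟨V, hV, hroot⟩ :=
    exists_pos_root_equilibriumCubic (Q := Q) hB hP hQ.le (by positivity) hEBP
  have hU : 0 < D / (C * (P + Q * V)) := by positivity
  refine ⟨(D / (C * (P + Q * V)), V),
    ⟨hU, hV, (isEquilibrium_iff hC hK hP hQ.le hU hV).2 ⟨rfl, hroot⟩⟩, ?_⟩
  rintro ⟨U', V'⟩ ⟨hU', hV', hEq⟩
  obtain ⟨hU'_eq, hroot'⟩ := (isEquilibrium_iff hC hK hP hQ.le hU' hV').1 hEq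
  obtain rfl := pos_root_equilibriumCubic_unique hP hQ.le hEBP hV' hV hroot' hroot
  exact Prod.ext hU'_eq rfl

/-- For positive `B, C, D, K, P, Q` with `C ≤ 1` and
`R0 = CPK/D > 1`, the non-scaled system has a unique positive equilibrium. -/
theorem unique_positive_equilibrium_nonscaled (B C D K P Q : ℝ)
    (hB : 0 < B) (hC : 0 < C) (hD : 0 < D) (hK : 0 < K) (hP : 0 < P) (hQ : 0 < Q)
    (hC1 : C ≤ 1) (hR0 : 1 < C * P * K / D) :
    ∃! UV : ℝ × ℝ, 0 < UV.1 ∧ 0 < UV.2 ∧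
      B * UV.1 * (1 - UV.1 / K) = P * UV.1 * UV.2 + Q * UV.1 * UV.2 ^ 2 ∧
      C * (P * UV.1 * UV.2 + Q * UV.1 * UV.2 ^ 2) = D * UV.2 :=
  unique_positive_equilibrium_nonscaled_general B C D K P Q hB hC hD hK hP hQ hR0
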